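/- Let u : ℝ³ → ℂ be smooth with |u(x)| < 1 for all x, and satisfy the QP¹ submodel equations □u = 0 and ⟨∂u,∂u⟩ = 0. Fix integers j ≥ m ≥ 1, let J_μ^{(j,m)} = √((j+m)!/(j(j+1)(j−m)!)) · (−iu)^{m−1}/(1−|u|²)^{j+1} · ( Σ_{n=0}^{j−m} α̃_n^{(j,m)} |u|^{2n} ∂_μu − Σ_{n=0}^{j−m} α̃_{j−m−n}^{(j,m)} |u|^{2n} u² ∂_μū ) with α̃_n^{(j,m)} = (n!/(m+n−1)!) C(j−m,n) C(j+1,n), and define J_μ^{(j,−m)} = conj(J_μ^{(j,m)}). Then (J₀^{(j,−m)}, J₁^{(j,−m)}, J₂^{(j,−m)}) is a conserved current, i.e. ∂₀J₀^{(j,−m)} − ∂₁J₁^{(j,−m)} − ∂₂J₂^{(j,−m)} = 0 on ℝ³. -/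

import Mathlib

open Complex ComplexConjugate Finset Nat

/-- Partial derivative in direction `μ` of a complex-valued function on `ℝ³`. -/
noncomputable def pd (μ : Fin 3) (f : (Fin 3 → ℝ) → ℂ) (x : Fin 3 → ℝ) : ℂ :=
  fderiv ℝ f x (Pi.single μ 1)

/-- The d'Alembertian `□u = ∂₀∂₀u − ∂₁∂₁u − ∂₂∂₂u` for the metric `diag(1,−1,−1)`. -/
noncomputable def dalembert (u : (Fin 3 → ℝ) → ℂ) (x : Fin 3 → ℝ) : ℂ :=
  pd 0 (pd 0 u) x - pd 1 (pd 1 u) x - pd 2 (pd 2 u) x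

/-- Minkowski product of gradients `⟨∂f,∂g⟩ = ∂₀f·∂₀g − ∂₁f·∂₁g − ∂₂f·∂₂g`. -/
noncomputable def minkGrad (f g : (Fin 3 → ℝ) → ℂ) (x : Fin 3 → ℝ) : ℂ :=
  pd 0 f x * pd 0 g x - pd 1 f x * pd 1 g x - pd 2 f x * pd 2 g x

/-- `(J₀,J₁,J₂)` is a conserved current if `∂₀J₀ − ∂₁J₁ − ∂₂J₂ = 0` identically. -/
def IsConservedCurrent (J : Fin 3 → (Fin 3 → ℝ) → ℂ) : Prop :=
  ∀ x, pd 0 (J 0) x - pd 1 (J 1) x - pd 2 (J 2) x = 0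

/-- The coefficient `α̃_n^{(j,m)} = (n!/(m+n−1)!) C(j−m,n) C(j+1,n)`. -/
noncomputable def alphaTildeCoeff (j m n : ℕ) : ℂ :=
  ((n ! : ℂ) / ((m + n - 1)! : ℂ)) *
    (Nat.choose (j - m) n : ℂ) * (Nat.choose (j + 1) n : ℂ)

/-- The current `J_μ^{(j,m)}` of the `QP¹` submodel, for `j ≥ m ≥ 1`. -/
noncomputable def JjmQP (u : (Fin 3 → ℝ) → ℂ) (j m : ℕ) (μ : Fin 3) (x : Fin 3 → ℝ) : ℂ :=
  (Real.sqrt (((j + m)! : ℝ) / ((j : ℝ) * ((j : ℝ) + 1) * ((j - m)! : ℝ))) : ℂ) *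
    (-Complex.I * u x) ^ (m - 1) / (1 - u x * conj (u x)) ^ (j + 1) *
    ((∑ n ∈ Finset.range (j - m + 1),
        alphaTildeCoeff j m n * (u x * conj (u x)) ^ n * pd μ u x)
      - ∑ n ∈ Finset.range (j - m + 1),
          alphaTildeCoeff j m (j - m - n) * (u x * conj (u x)) ^ n * (u x) ^ 2 *
            pd μ (fun y => conj (u y)) x)


set_option maxHeartbeats 1000000

section pdlemmas
variable {f g : (Fin 3 → ℝ) → ℂ} {x : Fin 3 → ℝ} {μ : Fin 3}

lemma pd_const (c : ℂ) : pd μ (fun _ => c) x = 0 := by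
  simp [pd]

lemma pd_add (hf : DifferentiableAt ℝ f x) (hg : DifferentiableAt ℝ g x) :
    pd μ (fun y => f y + g y) x = pd μ f x + pd μ g x := by
  simp [pd, fderiv_fun_add hf hg]

lemma pd_sub (hf : DifferentiableAt ℝ f x) (hg : DifferentiableAt ℝ g x) :
    pd μ (fun y => f y - g y) x = pd μ f x - pd μ g x := by
  simp [pd, fderiv_fun_sub hf hg]

lemma pd_mul (hf : DifferentiableAt ℝ f x) (hg : DifferentiableAt ℝ g x) :
    pd μ (fun y => f y * g y) x = pd μ f x * g x + f x * pd μ g x := by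
  simp [pd, fderiv_fun_mul hf hg, smul_eq_mul]; ring

lemma pd_const_mul (hf : DifferentiableAt ℝ f x) (c : ℂ) :
    pd μ (fun y => c * f y) x = c * pd μ f x := by
  simp [pd, fderiv_const_mul hf c]

lemma pd_conj (hf : DifferentiableAt ℝ f x) :
    pd μ (fun y => conj (f y)) x = conj (pd μ f x) := by
  have h := (hf.hasFDerivAt.star (𝕜 := ℝ)).fderiv
  simp only [pd, Complex.star_def] at h ⊢
  rw [h]; simp

lemma pd_pow (hf : DifferentiableAt ℝ f x) (n : ℕ) :
    pd μ (fun y => f y ^ n) x = (n : ℂ) * f x ^ (n - 1) * pd μ f x := by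
  induction n with
  | zero => simpa using pd_const (μ := μ) (x := x) 1
  | succ n ih =>
    have : (fun y => f y ^ (n + 1)) = fun y => f y ^ n * f y := by
      funext y; rw [pow_succ]
    rw [this, pd_mul (hf.fun_pow n) hf, ih]
    rcases Nat.eq_zero_or_pos n with h0 | h1
    · subst h0; simp
    · have h : n - 1 + 1 = n := Nat.succ_pred_eq_of_pos h1
      have hp : f x ^ (n-1) * f x = f x ^ n := by rw [← pow_succ, h]
      simp only [Nat.add_sub_cancel]
      push_cast
      calc (n:ℂ) * f x ^ (n - 1) * pd μ f x * f x + f x ^ n * pd μ f x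
          = (n:ℂ) * (f x ^ (n-1) * f x) * pd μ f x + f x ^ n * pd μ f x := by ring
        _ = ((n:ℂ)+1) * f x ^ n * pd μ f x := by rw [hp]; ring

lemma pd_sum {ι : Type*} (s : Finset ι) (F : ι → (Fin 3 → ℝ) → ℂ)
    (hF : ∀ i ∈ s, DifferentiableAt ℝ (F i) x) :
    pd μ (fun y => ∑ i ∈ s, F i y) x = ∑ i ∈ s, pd μ (F i) x := by
  simp [pd, fderiv_fun_sum hF]

lemma pd_inv (hf : DifferentiableAt ℝ f x) (h0 : f x ≠ 0) :
    pd μ (fun y => (f y)⁻¹) x = -((f x)^2)⁻¹ * pd μ f x := by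
  have hinv : DifferentiableAt ℝ (fun y => (f y)⁻¹) x := hf.inv h0
  have hone : pd μ (fun y => (f y)⁻¹ * f y) x = 0 := by
    have : (fun y => (f y)⁻¹ * f y) =ᶠ[nhds x] (fun _ => (1:ℂ)) := by
      filter_upwards [hf.continuousAt.preimage_mem_nhds
        (isOpen_ne.mem_nhds (by simpa using h0) : {z : ℂ | z ≠ 0} ∈ nhds (f x))] with y hy
      exact inv_mul_cancel₀ hy
    rw [pd, Filter.EventuallyEq.fderiv_eq this]
    simp
  rw [pd_mul hinv hf] at hone
  have hx2 : (f x)^2 ≠ 0 := pow_ne_zero _ h0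
  set p := pd μ (fun y => (f y)⁻¹) x with hp
  have key : p * (f x)^2 = - pd μ f x := by
    calc p * (f x)^2 = (p * f x + (f x)⁻¹ * pd μ f x) * f x - (f x)⁻¹ * f x * pd μ f x := by ring
      _ = - pd μ f x := by rw [hone, inv_mul_cancel₀ h0]; ring
  have h4 : pd μ f x = -(p * (f x)^2) := by linear_combination key
  rw [h4, neg_mul_neg, mul_comm p, inv_mul_cancel_left₀ hx2]

noncomputable def αc (a k n : ℕ) : ℂ := alphaTildeCoeff (a + 1 + k) (a + 1) n

noncomputable def gam (a k n : ℕ) : ℂ :=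
  ((k ! : ℂ) * ((a+k+2)! : ℂ)) /
    (((a+n+1)! : ℂ) * (((k-n)!) : ℂ) * ((n !) : ℂ) * (((a+1+k-n)!) : ℂ))

lemma fact_cast_ne (n : ℕ) : ((n ! : ℕ) : ℂ) ≠ 0 :=
  Nat.cast_ne_zero.mpr (Nat.factorial_ne_zero n)

lemma nat_cast_ne (n : ℕ) (h : n ≠ 0) : ((n : ℕ) : ℂ) ≠ 0 := Nat.cast_ne_zero.mpr h

lemma αc_eq (a k n : ℕ) :
    αc a k n = ((n ! : ℂ) / ((a+n)! : ℂ)) * (Nat.choose k n : ℂ) * (Nat.choose (a+k+2) n : ℂ) := by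
  unfold αc alphaTildeCoeff
  rw [show a + 1 + n - 1 = a + n by omega, show a + 1 + k - (a+1) = k by omega,
    show a + 1 + k + 1 = a + k + 2 by omega]

lemma αc_frac (a k n : ℕ) (hn : n ≤ k) :
    αc a k n = ((k ! : ℂ) * ((a+k+2)! : ℂ)) /
      (((a+n)! : ℂ) * (((k-n)!) : ℂ) * ((n !) : ℂ) * (((a+k+2-n)!) : ℂ)) := by
  have d1 := fact_cast_ne (a+n); have d2 := fact_cast_ne n; have d3 := fact_cast_ne (k-n)
  have d4 := fact_cast_ne (a+k+2-n)
  rw [αc_eq, Nat.cast_choose ℂ hn, Nat.cast_choose ℂ (show n ≤ a+k+2 by omega),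
    eq_div_iff (by exact mul_ne_zero (mul_ne_zero (mul_ne_zero d1 d3) d2) d4)]
  field_simp

lemma claim1 (a k n : ℕ) (hn : n ≤ k) :
    ((a:ℂ)+k+2-n) * αc a k n + ((n:ℂ)+1) * αc a k (n+1)
      = ((a:ℂ)+k+1) * gam a k n := by
  rcases eq_or_lt_of_le hn with rfl | hlt
  · -- n = k
    have h1 : αc a n (n+1) = 0 := by
      rw [αc_eq, Nat.choose_eq_zero_of_lt (Nat.lt_succ_self n)]; simp
    rw [h1, αc_frac a n n le_rfl, gam]
    rw [show n - n = 0 by omega, show a+n+2-n = a+2 by omega, show a+1+n-n = a+1 by omega]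
    have d1 := fact_cast_ne (a+n); have d2 := fact_cast_ne n; have d3 := fact_cast_ne 0
    have d4 := fact_cast_ne (a+2); have d5 := fact_cast_ne (a+n+1); have d6 := fact_cast_ne (a+1)
    rw [mul_zero, add_zero, ← mul_div_assoc, ← mul_div_assoc,
      div_eq_div_iff (mul_ne_zero (mul_ne_zero (mul_ne_zero d1 d3) d2) d4)
        (mul_ne_zero (mul_ne_zero (mul_ne_zero d5 d3) d2) d6)]
    rw [show ((a+n+1)! : ℂ) = ((a+n+1 : ℕ) : ℂ) * ((a+n)! : ℂ) by
        rw [show a+n+1 = (a+n)+1 by omega, Nat.factorial_succ]; push_cast; ring,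
      show ((a+2)! : ℂ) = ((a+2 : ℕ) : ℂ) * ((a+1)! : ℂ) by
        rw [show a+2 = (a+1)+1 by omega, Nat.factorial_succ]; push_cast; ring]
    push_cast
    ring
  · -- n < k : write k = n + 1 + b
    obtain ⟨b, rfl⟩ : ∃ b, k = n + 1 + b := ⟨k - n - 1, by omega⟩
    rw [αc_frac a (n+1+b) n (by omega), αc_frac a (n+1+b) (n+1) (by omega), gam]
    rw [show n+1+b-n = b+1 by omega, show a+(n+1+b)+2-n = a+b+3 by omega,
      show n+1+b-(n+1) = b by omega, show a+(n+1+b)+2-(n+1) = a+b+2 by omega,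
      show a+1+(n+1+b)-n = a+b+2 by omega]
    rw [← mul_div_assoc, ← mul_div_assoc, ← mul_div_assoc]
    have d1 := fact_cast_ne (a+n); have d2 := fact_cast_ne n; have d3 := fact_cast_ne (b+1)
    have d4 := fact_cast_ne (a+b+3); have d5 := fact_cast_ne (a+(n+1)); have d6 := fact_cast_ne b
    have d7 := fact_cast_ne (n+1); have d8 := fact_cast_ne (a+b+2); have d9 := fact_cast_ne (a+n+1)
    have D1 : ((a+n)! : ℂ) * ((b+1)! : ℂ) * (n ! : ℂ) * ((a+b+3)! : ℂ) ≠ 0 :=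
      mul_ne_zero (mul_ne_zero (mul_ne_zero d1 d3) d2) d4
    have D2 : ((a+(n+1))! : ℂ) * ((b)! : ℂ) * ((n+1)! : ℂ) * ((a+b+2)! : ℂ) ≠ 0 :=
      mul_ne_zero (mul_ne_zero (mul_ne_zero d5 d6) d7) d8
    have D3 : ((a+n+1)! : ℂ) * ((b+1)! : ℂ) * (n ! : ℂ) * ((a+b+2)! : ℂ) ≠ 0 :=
      mul_ne_zero (mul_ne_zero (mul_ne_zero d9 d3) d2) d8
    rw [div_add_div _ _ D1 D2, div_eq_div_iff (mul_ne_zero D1 D2) D3]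
    rw [show ((b+1)! : ℂ) = ((b+1 : ℕ) : ℂ) * ((b)! : ℂ) by rw [Nat.factorial_succ]; push_cast; ring,
      show ((a+b+3)! : ℂ) = ((a+b+3 : ℕ) : ℂ) * ((a+b+2)! : ℂ) by
        rw [show a+b+3 = (a+b+2)+1 by omega, Nat.factorial_succ]; push_cast; ring,
      show ((a+(n+1))! : ℂ) = ((a+n+1 : ℕ) : ℂ) * ((a+n)! : ℂ) by
        rw [show a+(n+1) = (a+n)+1 by omega, Nat.factorial_succ]; push_cast; ring,
      show ((n+1)! : ℂ) = ((n+1 : ℕ) : ℂ) * ((n)! : ℂ) by rw [Nat.factorial_succ]; push_cast; ring,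
      show ((a+n+1)! : ℂ) = ((a+n+1 : ℕ) : ℂ) * ((a+n)! : ℂ) by
        rw [show a+n+1 = (a+n)+1 by omega, Nat.factorial_succ]; push_cast; ring]
    push_cast
    ring

lemma αc_top (a k : ℕ) : αc a k (k+1) = 0 := by
  rw [αc_eq, Nat.choose_eq_zero_of_lt (Nat.lt_succ_self k)]; simp

lemma gam_symm (a k n : ℕ) (hn : n ≤ k) : gam a k (k-n) = gam a k n := by
  unfold gam
  rw [show k-(k-n) = n by omega, show a+(k-n)+1 = a+1+k-n by omega,
    show a+1+k-(k-n) = a+n+1 by omega]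
  ring_nf

lemma star_id (a k n : ℕ) (hn : n ≤ k) :
    ((a:ℂ)+k+2-n) * αc a k n + ((n:ℂ)+1) * αc a k (n+1)
      = ((a:ℂ)+n+2) * αc a k (k-n) + ((k:ℂ)+1-n) * αc a k (k-n+1) := by
  have h2 := claim1 a k (k-n) (Nat.sub_le k n)
  rw [Nat.cast_sub hn] at h2
  rw [claim1 a k n hn, ← gam_symm a k n hn]
  linear_combination -h2

lemma LA (a k : ℕ) (t : ℂ) :
    ((a:ℂ)+k+2) * (∑ n ∈ range (k+1), αc a k n * t^n)
      + (1-t) * (∑ n ∈ range (k+1), αc a k n * n * t^(n-1))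
    = ∑ n ∈ range (k+1), (((a:ℂ)+k+2-n) * αc a k n + ((n:ℂ)+1) * αc a k (n+1)) * t^n := by
  have h1 : (∑ n ∈ range (k+1), αc a k n * n * t^(n-1))
      = ∑ n ∈ range (k+1), ((n:ℂ)+1) * αc a k (n+1) * t^n := by
    rw [Finset.sum_range_succ' (fun n => αc a k n * n * t^(n-1)) k,
      Finset.sum_range_succ (fun n => ((n:ℂ)+1) * αc a k (n+1) * t^n) k]
    rw [αc_top]
    simp only [Nat.cast_zero, mul_zero, zero_mul, add_zero, mul_zero, Nat.add_sub_cancel]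
    apply Finset.sum_congr rfl; intro i _; push_cast; ring
  have h2 : t * (∑ n ∈ range (k+1), αc a k n * n * t^(n-1))
      = ∑ n ∈ range (k+1), (n:ℂ) * αc a k n * t^n := by
    rw [Finset.mul_sum]
    apply Finset.sum_congr rfl; intro i _
    rcases i with _ | i
    · simp
    · simp only [Nat.add_sub_cancel]; rw [pow_succ]; push_cast; ring
  have hA3 : ∑ n ∈ range (k+1), (((a:ℂ)+k+2-n) * αc a k n + ((n:ℂ)+1) * αc a k (n+1)) * t^n
      = (∑ n ∈ range (k+1), ((a:ℂ)+k+2-n) * αc a k n * t^n)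
        + ∑ n ∈ range (k+1), ((n:ℂ)+1) * αc a k (n+1) * t^n := by
    rw [← Finset.sum_add_distrib]; apply Finset.sum_congr rfl; intro i _; ring
  have hA4 : ∑ n ∈ range (k+1), ((a:ℂ)+k+2-n) * αc a k n * t^n
      = ((a:ℂ)+k+2) * (∑ n ∈ range (k+1), αc a k n * t^n)
        - ∑ n ∈ range (k+1), (n:ℂ) * αc a k n * t^n := by
    rw [Finset.mul_sum, ← Finset.sum_sub_distrib]
    apply Finset.sum_congr rfl; intro i _; ring
  linear_combination h1 - h2 - hA3 - hA4

lemma LB (a k : ℕ) (t : ℂ) :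
    ((a:ℂ)+k+2) * (t * ∑ n ∈ range (k+1), αc a k (k-n) * t^n)
      + (1-t) * (((a:ℂ)+2) * (∑ n ∈ range (k+1), αc a k (k-n) * t^n)
          + t * (∑ n ∈ range (k+1), αc a k (k-n) * n * t^(n-1)))
    = ∑ n ∈ range (k+1), (((a:ℂ)+n+2) * αc a k (k-n) + ((k:ℂ)+1-n) * αc a k (k-n+1)) * t^n := by
  have hB1 : t * (∑ n ∈ range (k+1), αc a k (k-n) * t^n)
      = ∑ n ∈ range (k+1), αc a k (k-n) * t^(n+1) := by
    rw [Finset.mul_sum]; apply Finset.sum_congr rfl; intro i _; rw [pow_succ]; ring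
  have hB2 : t * (∑ n ∈ range (k+1), αc a k (k-n) * n * t^(n-1))
      = ∑ n ∈ range (k+1), (n:ℂ) * αc a k (k-n) * t^n := by
    rw [Finset.mul_sum]; apply Finset.sum_congr rfl; intro i _
    rcases i with _ | i
    · simp
    · simp only [Nat.add_sub_cancel]; rw [pow_succ]; push_cast; ring
  have hB3 : t * (∑ n ∈ range (k+1), (n:ℂ) * αc a k (k-n) * t^n)
      = ∑ n ∈ range (k+1), (n:ℂ) * αc a k (k-n) * t^(n+1) := by
    rw [Finset.mul_sum]; apply Finset.sum_congr rfl; intro i _; rw [pow_succ]; ring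
  have hR1 : ∑ n ∈ range (k+1), ((k:ℂ)-n) * αc a k (k-n) * t^(n+1)
      = ∑ n ∈ range (k+1), ((k:ℂ)+1-n) * αc a k (k-n+1) * t^n := by
    rw [Finset.sum_range_succ (fun n => ((k:ℂ)-n) * αc a k (k-n) * t^(n+1)) k,
      Finset.sum_range_succ' (fun n => ((k:ℂ)+1-n) * αc a k (k-n+1) * t^n) k]
    rw [show k - 0 + 1 = k+1 by omega, αc_top]
    simp only [sub_self, zero_mul, mul_zero, add_zero, Nat.cast_zero]
    apply Finset.sum_congr rfl; intro i hi
    have hik := Finset.mem_range.mp hi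
    rw [show k - (i+1) + 1 = k - i by omega]
    push_cast; ring
  have hsplit1 : ∑ n ∈ range (k+1), ((k:ℂ)-n) * αc a k (k-n) * t^(n+1)
      = (k:ℂ) * (∑ n ∈ range (k+1), αc a k (k-n) * t^(n+1))
        - ∑ n ∈ range (k+1), (n:ℂ) * αc a k (k-n) * t^(n+1) := by
    rw [Finset.mul_sum, ← Finset.sum_sub_distrib]
    apply Finset.sum_congr rfl; intro i _; ring
  have hT : ∑ n ∈ range (k+1), (((a:ℂ)+n+2) * αc a k (k-n) + ((k:ℂ)+1-n) * αc a k (k-n+1)) * t^n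
      = (∑ n ∈ range (k+1), ((a:ℂ)+n+2) * αc a k (k-n) * t^n)
        + ∑ n ∈ range (k+1), ((k:ℂ)+1-n) * αc a k (k-n+1) * t^n := by
    rw [← Finset.sum_add_distrib]; apply Finset.sum_congr rfl; intro i _; ring
  have hsplit3 : ∑ n ∈ range (k+1), ((a:ℂ)+n+2) * αc a k (k-n) * t^n
      = ((a:ℂ)+2) * (∑ n ∈ range (k+1), αc a k (k-n) * t^n)
        + ∑ n ∈ range (k+1), (n:ℂ) * αc a k (k-n) * t^n := by
    rw [Finset.mul_sum, ← Finset.sum_add_distrib]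
    apply Finset.sum_congr rfl; intro i _; ring
  linear_combination (k:ℂ) * hB1 + (1-t) * hB2 - hB3 - hsplit3 - hsplit1 + hR1 - hT

lemma Ekey (a k : ℕ) (t : ℂ) :
    ((a:ℂ)+k+2) * ((∑ n ∈ range (k+1), αc a k n * t^n)
        - t * (∑ n ∈ range (k+1), αc a k (k-n) * t^n))
      + (1-t) * ((∑ n ∈ range (k+1), αc a k n * n * t^(n-1))
        - t * (∑ n ∈ range (k+1), αc a k (k-n) * n * t^(n-1))
        - ((a:ℂ)+2) * (∑ n ∈ range (k+1), αc a k (k-n) * t^n)) = 0 := by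
  have hLA := LA a k t
  have hLB := LB a k t
  have hstar : ∑ n ∈ range (k+1), (((a:ℂ)+k+2-n) * αc a k n + ((n:ℂ)+1) * αc a k (n+1)) * t^n
      = ∑ n ∈ range (k+1), (((a:ℂ)+n+2) * αc a k (k-n) + ((k:ℂ)+1-n) * αc a k (k-n+1)) * t^n := by
    apply Finset.sum_congr rfl; intro i hi
    rw [star_id a k i (by have := Finset.mem_range.mp hi; omega)]
  linear_combination hLA - hLB + hstar

section pdlem2
variable {f g : (Fin 3 → ℝ) → ℂ} {x : Fin 3 → ℝ} {μ : Fin 3}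
lemma poly_pd {v : (Fin 3 → ℝ) → ℂ} (hv : DifferentiableAt ℝ v x) (c : ℕ → ℂ) (N : ℕ) :
    pd μ (fun y => ∑ n ∈ range N, c n * v y ^ n) x
      = (∑ n ∈ range N, c n * n * v x ^ (n-1)) * pd μ v x := by
  rw [pd_sum _ _ (fun i _ => (hv.fun_pow i).const_mul (c i)), Finset.sum_mul]
  apply Finset.sum_congr rfl; intro i _
  rw [pd_const_mul (hv.fun_pow i) (c i), pd_pow hv]; ring

end pdlem2

noncomputable def Sfun (u : (Fin 3 → ℝ) → ℂ) : (Fin 3 → ℝ) → ℂ := fun y => u y * conj (u y)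
noncomputable def Afun (u : (Fin 3 → ℝ) → ℂ) (a k : ℕ) : (Fin 3 → ℝ) → ℂ :=
  fun y => ∑ n ∈ range (k+1), αc a k n * Sfun u y ^ n
noncomputable def Bfun (u : (Fin 3 → ℝ) → ℂ) (a k : ℕ) : (Fin 3 → ℝ) → ℂ :=
  fun y => ∑ n ∈ range (k+1), αc a k (k-n) * Sfun u y ^ n
noncomputable def Pfun (u : (Fin 3 → ℝ) → ℂ) (a : ℕ) : (Fin 3 → ℝ) → ℂ :=
  fun y => (-Complex.I * u y) ^ a
noncomputable def Vfun (u : (Fin 3 → ℝ) → ℂ) (a k : ℕ) : (Fin 3 → ℝ) → ℂ :=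
  fun y => (1 - Sfun u y) ^ (a+1+k+1)
noncomputable def Wfun (u : (Fin 3 → ℝ) → ℂ) (a k : ℕ) (μ : Fin 3) : (Fin 3 → ℝ) → ℂ :=
  fun y => Afun u a k y * pd μ u y - Bfun u a k y * (u y)^2 * conj (pd μ u y)
noncomputable def cst (a k : ℕ) : ℂ :=
  (Real.sqrt ((((a+1+k) + (a+1))! : ℝ) /
    (((a+1+k : ℕ) : ℝ) * (((a+1+k : ℕ) : ℝ) + 1) * ((k)! : ℝ))) : ℂ)

section anal
variable {u : (Fin 3 → ℝ) → ℂ}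

lemma dcu (du : Differentiable ℝ u) : Differentiable ℝ (fun y => conj (u y)) := by
  have : (fun y => conj (u y)) = (fun y => star (u y)) := rfl
  rw [this]; exact fun y => (du y).star

lemma J_restate (du : Differentiable ℝ u) (a k : ℕ) (μ : Fin 3) :
    JjmQP u (a+1+k) (a+1) μ
      = fun y => cst a k * (Pfun u a y * ((Vfun u a k y)⁻¹ * Wfun u a k μ y)) := by
  funext y
  unfold JjmQP cst Pfun Vfun Wfun Afun Bfun Sfun αc
  rw [show a+1+k - (a+1) = k by omega, show a+1-1 = a by omega]
  rw [pd_conj (du y)]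
  rw [Finset.sum_mul, Finset.sum_mul, Finset.sum_mul]
  rw [div_eq_mul_inv]
  ring

end anal

section anal2
variable {u : (Fin 3 → ℝ) → ℂ} (hu : ContDiff ℝ (⊤ : ℕ∞) u)
include hu

lemma du' : Differentiable ℝ u := hu.differentiable (by simp)

lemma dpu (ν : Fin 3) : Differentiable ℝ (pd ν u) := by
  have h1 : ContDiff ℝ (⊤ : ℕ∞) (fderiv ℝ u) := hu.fderiv_right (by simp)
  exact (h1.clm_apply contDiff_const).differentiable (by simp)

lemma dS : Differentiable ℝ (Sfun u) := (du' hu).mul (dcu (du' hu))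

lemma dA (a k : ℕ) : Differentiable ℝ (Afun u a k) := by
  intro x
  exact DifferentiableAt.fun_sum (fun i _ => ((dS hu x).fun_pow i).const_mul (αc a k i))

lemma dB (a k : ℕ) : Differentiable ℝ (Bfun u a k) := by
  intro x
  exact DifferentiableAt.fun_sum (fun i _ => ((dS hu x).fun_pow i).const_mul (αc a k (k-i)))

lemma dP (a : ℕ) : Differentiable ℝ (Pfun u a) :=
  fun x => (((du' hu) x).const_mul (-Complex.I)).pow a

lemma dV (a k : ℕ) : Differentiable ℝ (Vfun u a k) :=
  fun x => ((differentiableAt_const (1:ℂ)).sub (dS hu x)).pow (a+1+k+1)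

lemma dW (a k : ℕ) (μ : Fin 3) : Differentiable ℝ (Wfun u a k μ) := by
  intro x
  refine DifferentiableAt.sub ?_ ?_
  · exact (dA hu a k x).mul (dpu hu μ x)
  · refine DifferentiableAt.mul (DifferentiableAt.mul (dB hu a k x) (((du' hu) x).pow 2)) ?_
    have : (fun y => conj (pd μ u y)) = (fun y => star (pd μ u y)) := rfl
    rw [this]
    exact (dpu hu μ x).star

end anal2

lemma Vne {u : (Fin 3 → ℝ) → ℂ} (hdisk : ∀ y, ‖u y‖ < 1) (a k : ℕ)
    (x : Fin 3 → ℝ) : Vfun u a k x ≠ 0 := by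
  unfold Vfun Sfun
  apply pow_ne_zero
  rw [Complex.mul_conj, sub_ne_zero]
  intro h
  have h2 : (Complex.normSq (u x) : ℝ) = 1 := by
    have := h.symm
    exact_mod_cast this
  have h3 := hdisk x
  rw [← Complex.sq_norm] at h2
  nlinarith [norm_nonneg (u x)]

lemma pdJ_eq {u : (Fin 3 → ℝ) → ℂ} (hu : ContDiff ℝ (⊤ : ℕ∞) u)
    (hdisk : ∀ y, ‖u y‖ < 1) (a k : ℕ) (μ : Fin 3) (x : Fin 3 → ℝ) :
    pd μ (JjmQP u (a+1+k) (a+1) μ) x =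
      (cst a k * ((a:ℂ) * (-Complex.I * u x)^(a-1) * (-Complex.I) * (Vfun u a k x)⁻¹ * Afun u a k x
        + Pfun u a x * (((Vfun u a k x)^2)⁻¹ * ((a+1+k+1 : ℕ):ℂ) * (1 - Sfun u x)^(a+1+k)) * conj (u x) * Afun u a k x
        + Pfun u a x * (Vfun u a k x)⁻¹ * (∑ n ∈ range (k+1), αc a k n * n * Sfun u x ^ (n-1)) * conj (u x)))
        * (pd μ u x * pd μ u x)
      + (cst a k * (-((a:ℂ) * (-Complex.I * u x)^(a-1) * (-Complex.I)) * (Vfun u a k x)⁻¹ * Bfun u a k x * (u x)^2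
        + Pfun u a x * (((Vfun u a k x)^2)⁻¹ * ((a+1+k+1 : ℕ):ℂ) * (1 - Sfun u x)^(a+1+k)) * (u x * Afun u a k x - conj (u x) * Bfun u a k x * (u x)^2)
        + Pfun u a x * (Vfun u a k x)⁻¹ * ((∑ n ∈ range (k+1), αc a k n * n * Sfun u x ^ (n-1)) * u x
            - (∑ n ∈ range (k+1), αc a k (k-n) * n * Sfun u x ^ (n-1)) * conj (u x) * (u x)^2
            - 2 * Bfun u a k x * u x)))
        * (pd μ u x * conj (pd μ u x))
      + (cst a k * (-(Pfun u a x * (((Vfun u a k x)^2)⁻¹ * ((a+1+k+1 : ℕ):ℂ) * (1 - Sfun u x)^(a+1+k)) * u x * Bfun u a k x * (u x)^2)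
        - Pfun u a x * (Vfun u a k x)⁻¹ * (∑ n ∈ range (k+1), αc a k (k-n) * n * Sfun u x ^ (n-1)) * u x * (u x)^2))
        * (conj (pd μ u x) * conj (pd μ u x))
      + (cst a k * Pfun u a x * (Vfun u a k x)⁻¹ * Afun u a k x) * pd μ (pd μ u) x
      + (-(cst a k * Pfun u a x * (Vfun u a k x)⁻¹ * Bfun u a k x * (u x)^2)) * conj (pd μ (pd μ u) x) := by
  have du := du' hu
  have hdcu := dcu du
  -- derivative equations
  have hdS : pd μ (Sfun u) x = pd μ u x * conj (u x) + u x * conj (pd μ u x) := by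
    unfold Sfun
    rw [pd_mul (du x) (hdcu x), pd_conj (du x)]
  have hdP : pd μ (Pfun u a) x = (a:ℂ) * (-Complex.I * u x)^(a-1) * (-Complex.I * pd μ u x) := by
    unfold Pfun
    rw [pd_pow ((du x).const_mul (-Complex.I)), pd_const_mul (du x)]
  have hdV : pd μ (Vfun u a k) x = ((a+1+k+1 : ℕ):ℂ) * (1 - Sfun u x)^(a+1+k)
      * (0 - (pd μ u x * conj (u x) + u x * conj (pd μ u x))) := by
    unfold Vfun
    rw [pd_pow ((differentiableAt_const (1:ℂ)).fun_sub (dS hu x)), Nat.add_sub_cancel,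
      pd_sub (differentiableAt_const (1:ℂ)) (dS hu x), pd_const, hdS]
  have hdVinv : pd μ (fun y => (Vfun u a k y)⁻¹) x
      = -((Vfun u a k x)^2)⁻¹ * (((a+1+k+1 : ℕ):ℂ) * (1 - Sfun u x)^(a+1+k)
          * (0 - (pd μ u x * conj (u x) + u x * conj (pd μ u x)))) := by
    rw [pd_inv (dV hu a k x) (Vne hdisk a k x), hdV]
  have hdA : pd μ (Afun u a k) x = (∑ n ∈ range (k+1), αc a k n * n * Sfun u x ^ (n-1))
      * (pd μ u x * conj (u x) + u x * conj (pd μ u x)) := by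
    unfold Afun
    rw [poly_pd (dS hu x), hdS]
  have hdB : pd μ (Bfun u a k) x = (∑ n ∈ range (k+1), αc a k (k-n) * n * Sfun u x ^ (n-1))
      * (pd μ u x * conj (u x) + u x * conj (pd μ u x)) := by
    unfold Bfun
    rw [poly_pd (dS hu x), hdS]
  have hconjp : DifferentiableAt ℝ (fun y => conj (pd μ u y)) x := by
    have : (fun y => conj (pd μ u y)) = (fun y => star (pd μ u y)) := rfl
    rw [this]; exact (dpu hu μ x).star
  have hdW : pd μ (Wfun u a k μ) x
      = (pd μ (Afun u a k) x * pd μ u x + Afun u a k x * pd μ (pd μ u) x)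
        - (((pd μ (Bfun u a k) x * (u x)^2 + Bfun u a k x * (2 * (u x)^(2-1) * pd μ u x))) * conj (pd μ u x)
            + Bfun u a k x * (u x)^2 * conj (pd μ (pd μ u) x)) := by
    unfold Wfun
    rw [pd_sub ((dA hu a k x).fun_mul (dpu hu μ x))
        (((dB hu a k x).fun_mul ((du x).fun_pow 2)).fun_mul hconjp)]
    rw [pd_mul (dA hu a k x) (dpu hu μ x)]
    rw [pd_mul ((dB hu a k x).fun_mul ((du x).fun_pow 2)) hconjp]
    rw [pd_mul (dB hu a k x) ((du x).fun_pow 2)]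
    rw [pd_pow (du x), pd_conj (dpu hu μ x)]
    norm_num
  -- main chain
  rw [J_restate du a k μ]
  rw [pd_const_mul ((dP hu a x).fun_mul (((dV hu a k x).fun_inv (Vne hdisk a k x)).fun_mul (dW hu a k μ x)))]
  rw [pd_mul (dP hu a x) (((dV hu a k x).fun_inv (Vne hdisk a k x)).fun_mul (dW hu a k μ x))]
  rw [pd_mul ((dV hu a k x).fun_inv (Vne hdisk a k x)) (dW hu a k μ x)]
  rw [hdP, hdVinv, hdW, hdA, hdB]
  have hWx : Wfun u a k μ x
      = Afun u a k x * pd μ u x - Bfun u a k x * (u x)^2 * conj (pd μ u x) := rfl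
  rw [hWx]
  push_cast
  ring


/-- For a solution of the `QP¹` submodel `□u = 0`, `⟨∂u,∂u⟩ = 0` with values in the
unit disk, the current `J_μ^{(j,−m)} = conj(J_μ^{(j,m)})` is conserved for all `j ≥ m ≥ 1`. -/
theorem qp1_submodel_Jjm_neg_conserved (u : (Fin 3 → ℝ) → ℂ) (hu : ContDiff ℝ (⊤ : ℕ∞) u)
    (hdisk : ∀ x, ‖u x‖ < 1)
    (hbox : ∀ x, dalembert u x = 0) (hnull : ∀ x, minkGrad u u x = 0)
    (j m : ℕ) (hm : 1 ≤ m) (hjm : m ≤ j) :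
    IsConservedCurrent (fun μ x => conj (JjmQP u j m μ x)) := by
  obtain ⟨a, rfl⟩ : ∃ a, m = a + 1 := ⟨m - 1, by omega⟩
  obtain ⟨k, rfl⟩ : ∃ k, j = a + 1 + k := ⟨j - (a+1), by omega⟩
  intro x
  have du := du' hu
  have dJ : ∀ μ : Fin 3, DifferentiableAt ℝ (JjmQP u (a+1+k) (a+1) μ) x := by
    intro μ
    rw [J_restate du a k μ]
    exact ((dP hu a x).mul (((dV hu a k x).inv (Vne hdisk a k x)).mul
      (dW hu a k μ x))).const_mul (cst a k)
  show pd 0 (fun y => conj (JjmQP u (a+1+k) (a+1) 0 y)) x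
      - pd 1 (fun y => conj (JjmQP u (a+1+k) (a+1) 1 y)) x
      - pd 2 (fun y => conj (JjmQP u (a+1+k) (a+1) 2 y)) x = 0
  rw [pd_conj (dJ 0), pd_conj (dJ 1), pd_conj (dJ 2), ← map_sub, ← map_sub]
  rw [show (0 : ℂ) = conj (0 : ℂ) by simp]
  congr 1
  -- now prove divergence of J itself is zero
  rw [pdJ_eq hu hdisk a k 0 x, pdJ_eq hu hdisk a k 1 x, pdJ_eq hu hdisk a k 2 x]
  have h1 : pd 0 u x * pd 0 u x - pd 1 u x * pd 1 u x - pd 2 u x * pd 2 u x = 0 := by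
    have := hnull x; unfold minkGrad at this; exact this
  have h2 : conj (pd 0 u x) * conj (pd 0 u x) - conj (pd 1 u x) * conj (pd 1 u x)
      - conj (pd 2 u x) * conj (pd 2 u x) = 0 := by
    have := congrArg (starRingEnd ℂ) h1
    simpa [map_sub, map_mul] using this
  have h3 : pd 0 (pd 0 u) x - pd 1 (pd 1 u) x - pd 2 (pd 2 u) x = 0 := by
    have := hbox x; unfold dalembert at this; exact this
  have h4 : conj (pd 0 (pd 0 u) x) - conj (pd 1 (pd 1 u) x) - conj (pd 2 (pd 2 u) x) = 0 := by
    have := congrArg (starRingEnd ℂ) h3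
    simpa [map_sub] using this
  -- the coefficient of p⋅conj p vanishes
  have hiV : (Vfun u a k x)⁻¹ = ((Vfun u a k x)^2)⁻¹ * Vfun u a k x := by
    rw [sq, mul_inv, mul_assoc, inv_mul_cancel₀ (Vne hdisk a k x), mul_one]
  have hz2 : (a:ℂ) * (-Complex.I * u x)^(a-1) * (-Complex.I) * (u x)^2
      = (a:ℂ) * Pfun u a x * u x := by
    unfold Pfun
    rcases a with _ | b
    · simp
    · simp only [Nat.add_sub_cancel]
      rw [pow_succ]; push_cast; ring
  have hVG : Vfun u a k x = (1 - Sfun u x)^(a+1+k) * (1 - Sfun u x) := by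
    unfold Vfun; rw [pow_succ]
  have hN : ((a+1+k+1 : ℕ):ℂ) = (a:ℂ) + k + 2 := by push_cast; ring
  have hK2 : cst a k * (-((a:ℂ) * (-Complex.I * u x)^(a-1) * (-Complex.I)) * (Vfun u a k x)⁻¹ * Bfun u a k x * (u x)^2
        + Pfun u a x * (((Vfun u a k x)^2)⁻¹ * ((a+1+k+1 : ℕ):ℂ) * (1 - Sfun u x)^(a+1+k)) * (u x * Afun u a k x - conj (u x) * Bfun u a k x * (u x)^2)
        + Pfun u a x * (Vfun u a k x)⁻¹ * ((∑ n ∈ range (k+1), αc a k n * n * Sfun u x ^ (n-1)) * u x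
            - (∑ n ∈ range (k+1), αc a k (k-n) * n * Sfun u x ^ (n-1)) * conj (u x) * (u x)^2
            - 2 * Bfun u a k x * u x)) = 0 := by
    have hE := Ekey a k (Sfun u x)
    have hSval : Sfun u x = u x * conj (u x) := rfl
    have hAx : Afun u a k x = ∑ n ∈ range (k+1), αc a k n * Sfun u x ^ n := rfl
    have hBx : Bfun u a k x = ∑ n ∈ range (k+1), αc a k (k-n) * Sfun u x ^ n := rfl
    rw [hiV, hVG, hN, hAx, hBx]
    rw [hSval] at hE ⊢
    linear_combination (-(cst a k * (((1 - u x * conj (u x))^(a+1+k) * (1 - u x * conj (u x)))^2)⁻¹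
        * ((1 - u x * conj (u x))^(a+1+k) * (1 - u x * conj (u x)))
        * (∑ n ∈ range (k+1), αc a k (k-n) * (u x * conj (u x)) ^ n))) * hz2
      + (cst a k * (((1 - u x * conj (u x))^(a+1+k) * (1 - u x * conj (u x)))^2)⁻¹
        * (u x) * Pfun u a x * (1 - u x * conj (u x))^(a+1+k)) * hE
  linear_combination
    (cst a k * ((a:ℂ) * (-Complex.I * u x)^(a-1) * (-Complex.I) * (Vfun u a k x)⁻¹ * Afun u a k x
        + Pfun u a x * (((Vfun u a k x)^2)⁻¹ * ((a+1+k+1 : ℕ):ℂ) * (1 - Sfun u x)^(a+1+k)) * conj (u x) * Afun u a k x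
        + Pfun u a x * (Vfun u a k x)⁻¹ * (∑ n ∈ range (k+1), αc a k n * n * Sfun u x ^ (n-1)) * conj (u x))) * h1
    + (cst a k * (-(Pfun u a x * (((Vfun u a k x)^2)⁻¹ * ((a+1+k+1 : ℕ):ℂ) * (1 - Sfun u x)^(a+1+k)) * u x * Bfun u a k x * (u x)^2)
        - Pfun u a x * (Vfun u a k x)⁻¹ * (∑ n ∈ range (k+1), αc a k (k-n) * n * Sfun u x ^ (n-1)) * u x * (u x)^2)) * h2
    + (cst a k * Pfun u a x * (Vfun u a k x)⁻¹ * Afun u a k x) * h3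
    + (-(cst a k * Pfun u a x * (Vfun u a k x)⁻¹ * Bfun u a k x * (u x)^2)) * h4
    + (pd 0 u x * conj (pd 0 u x) - pd 1 u x * conj (pd 1 u x) - pd 2 u x * conj (pd 2 u x)) * hK2
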